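/- Let m₁, m₂, ν₁, ν₂ > 0 satisfy m₁ − m₂ > ν₂ − ν₁, m₁/ν₁ ≥ m₂/ν₂, m₁ − m₂ + 2ν₁ > 0, and ν₂ > m₁. Define the marginal function h_W(w) = ∫₀^∞ h(u,w) du, where h(u,w) = K₀ · u^{(m₁+m₂)/2−1} · w^{m₁/2−1} · (1−w)^{m₂/2−1} · (1 + m₁uw/ν₁)^{−(m₁+ν₁)/2} · (1 + m₂u(1−w)/ν₂)^{−(m₂+ν₂)/2}. Then for all 0 < w < 1, A₂ · φ(w) ≤ h_W(w) ≤ A₁ · φ(w). -/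

import Mathlib

/-!
Factor the joint density as `h(u,w) = K₀ w^(m₁/2-1) (1-w)^(m₂/2-1) g_w(u)`, where
`g_w(u) = u^(s-1) (1+X)^(-p) (1+Y)^(-q)` with `X = m₁uw/ν₁`, `Y = m₂u(1-w)/ν₂`,
`s = (m₁+m₂)/2`, `p = (m₁+ν₁)/2`, `q = (m₂+ν₂)/2`. Since `q ≤ p` and `m₂/ν₂ ≤ m₁/ν₁`,
the product `(1+X)^(-p) (1+Y)^(-q)` is squeezed between two powers of linear factors in `u`
alone: from above by `(1 + (m₂/ν₂)u)^(-q)`, because `(m₂/ν₂)u ≤ X + Y`,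
and from below by `(1 + (m₁/(2ν₁))u)^(-2p)`, by AM-GM, because `X + Y ≤ (m₁/ν₁)u`.
Both comparison functions integrate in closed form,
`∫₀^∞ u^(s-1) (1+cu)^(-(s+t)) du = c^(-s) B(s,t)`, via `u = y/(c(1-y))` and Euler's Beta integral.
-/

open Real MeasureTheory Set

noncomputable def Beta (a b : ℝ) : ℝ := Gamma a * Gamma b / Gamma (a + b)

noncomputable def K₀ (m₁ m₂ ν₁ ν₂ : ℝ) : ℝ :=
  (m₁ / ν₁) ^ (m₁ / 2) * (m₂ / ν₂) ^ (m₂ / 2) /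
    (Beta (m₁ / 2) (ν₁ / 2) * Beta (m₂ / 2) (ν₂ / 2))

/-- The joint density `h(u,w)` of `(U,W)` for `u > 0`, `0 < w < 1`. -/
noncomputable def hDens (m₁ m₂ ν₁ ν₂ : ℝ) (u w : ℝ) : ℝ :=
  K₀ m₁ m₂ ν₁ ν₂ * u ^ ((m₁ + m₂) / 2 - 1) * w ^ (m₁ / 2 - 1) * (1 - w) ^ (m₂ / 2 - 1) *
    (1 + m₁ * u * w / ν₁) ^ (-(m₁ + ν₁) / 2) *
    (1 + m₂ * u * (1 - w) / ν₂) ^ (-(m₂ + ν₂) / 2)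

/-- The Beta density `φ(w)` with shape parameters `m₁/2`, `m₂/2`. -/
noncomputable def phi (m₁ m₂ : ℝ) (w : ℝ) : ℝ :=
  w ^ (m₁ / 2 - 1) * (1 - w) ^ (m₂ / 2 - 1) / Beta (m₁ / 2) (m₂ / 2)

noncomputable def A₁ (m₁ m₂ ν₁ ν₂ : ℝ) : ℝ :=
  (m₁ * ν₂ / (m₂ * ν₁)) ^ (m₁ / 2) * Beta ((m₁ + m₂) / 2) ((ν₂ - m₁) / 2) *
    Beta (m₁ / 2) (m₂ / 2) / (Beta (m₁ / 2) (ν₁ / 2) * Beta (m₂ / 2) (ν₂ / 2))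

noncomputable def A₂ (m₁ m₂ ν₁ ν₂ : ℝ) : ℝ :=
  2 ^ ((m₁ + m₂) / 2) * (m₂ * ν₁ / (m₁ * ν₂)) ^ (m₂ / 2) *
    Beta ((m₁ + m₂) / 2) ((m₁ - m₂ + 2 * ν₁) / 2) *
    Beta (m₁ / 2) (m₂ / 2) / (Beta (m₁ / 2) (ν₁ / 2) * Beta (m₂ / 2) (ν₂ / 2))

lemma Beta_pos {a b : ℝ} (ha : 0 < a) (hb : 0 < b) : 0 < Beta a b :=
  ProbabilityTheory.beta_pos ha hb

lemma ofReal_rpow_mul_one_sub_rpow {x : ℝ} (hx : x ∈ Ioc 0 1) (s t : ℝ) :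
    ((x ^ (s - 1) * (1 - x) ^ (t - 1) : ℝ) : ℂ) =
      (x : ℂ) ^ ((s : ℂ) - 1) * (1 - x) ^ ((t : ℂ) - 1) := by
  rw [Complex.ofReal_mul, Complex.ofReal_cpow hx.1.le, Complex.ofReal_cpow (sub_nonneg.2 hx.2)]
  push_cast
  rfl

lemma integrableOn_rpow_mul_one_sub_rpow {s t : ℝ} (hs : 0 < s) (ht : 0 < t) :
    IntegrableOn (fun x : ℝ ↦ x ^ (s - 1) * (1 - x) ^ (t - 1)) (Ioo 0 1) := by
  have h := Complex.betaIntegral_convergent (u := s) (v := t) (by simpa) (by simpa)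
  rw [intervalIntegrable_iff_integrableOn_Ioc_of_le zero_le_one] at h
  have h' := h.congr_fun (fun x hx ↦ (ofReal_rpow_mul_one_sub_rpow hx s t).symm) measurableSet_Ioc
  exact (IntegrableOn.mono_set h'.re Ioo_subset_Ioc_self).congr_fun
    (fun x _ ↦ Complex.ofReal_re _) measurableSet_Ioo

lemma integral_rpow_mul_one_sub_rpow {s t : ℝ} (hs : 0 < s) (ht : 0 < t) :
    ∫ x in Ioo (0 : ℝ) 1, x ^ (s - 1) * (1 - x) ^ (t - 1) = Beta s t := by
  rw [show Beta s t = ProbabilityTheory.beta s t from rfl,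
    ProbabilityTheory.beta_eq_betaIntegralReal s t hs ht, Complex.betaIntegral,
    intervalIntegral.integral_of_le zero_le_one,
    ← setIntegral_congr_fun measurableSet_Ioc (fun x hx ↦ ofReal_rpow_mul_one_sub_rpow hx s t),
    integral_complex_ofReal, Complex.ofReal_re, integral_Ioc_eq_integral_Ioo]

section Substitution

variable {c s t : ℝ}

lemma image_Ioo_div_mul_one_sub (hc : 0 < c) :
    (fun y : ℝ ↦ y / (c * (1 - y))) '' Ioo 0 1 = Ioi 0 := by
  ext x
  constructor
  · rintro ⟨y, ⟨hy0, hy1⟩, rfl⟩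
    have : 0 < 1 - y := by linarith
    exact mem_Ioi.2 (by positivity)
  · intro (hx : 0 < x)
    have hcx : 0 < 1 + c * x := by positivity
    refine ⟨c * x / (1 + c * x), ⟨by positivity, by rw [div_lt_one hcx]; linarith⟩, ?_⟩
    field_simp
    ring

lemma hasDerivAt_div_mul_one_sub (hc : c ≠ 0) {y : ℝ} (hy : y ≠ 1) :
    HasDerivAt (fun y : ℝ ↦ y / (c * (1 - y))) (1 / (c * (1 - y) ^ 2)) y := by
  have h1y : 1 - y ≠ 0 := sub_ne_zero.2 hy.symm
  refine ((hasDerivAt_id' y).div (((hasDerivAt_id' y).const_sub 1).const_mul c)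
    (mul_ne_zero hc h1y)).congr_deriv ?_
  field_simp
  ring

lemma injOn_div_mul_one_sub (hc : c ≠ 0) :
    InjOn (fun y : ℝ ↦ y / (c * (1 - y))) (Iio 1) := by
  intro y₁ (h₁ : y₁ < 1) y₂ (h₂ : y₂ < 1) heq
  rw [div_eq_div_iff (mul_ne_zero hc (by linarith)) (mul_ne_zero hc (by linarith))] at heq
  have : c * (y₁ - y₂) = 0 := by linear_combination heq
  simpa [hc, sub_eq_zero] using this

lemma abs_deriv_smul_comp_div_mul_one_sub (hc : 0 < c) (s t : ℝ) {y : ℝ} (hy : y ∈ Ioo (0 : ℝ) 1) :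
    |1 / (c * (1 - y) ^ 2)| •
      ((y / (c * (1 - y))) ^ (s - 1) * (1 + c * (y / (c * (1 - y)))) ^ (-(s + t))) =
      c ^ (-s) * (y ^ (s - 1) * (1 - y) ^ (t - 1)) := by
  obtain ⟨hy0, hy1⟩ := hy
  have h1y : 0 < 1 - y := by linarith
  have hsum : 1 + c * (y / (c * (1 - y))) = (1 - y)⁻¹ := by field_simp; ring
  have hc' : c ^ (-s) = (c ^ (s - 1) * c)⁻¹ := by
    rw [← rpow_add_one hc.ne', rpow_neg hc.le, sub_add_cancel]
  have hy' : (1 - y) ^ (s + t) = (1 - y) ^ (s - 1) * (1 - y) ^ (t - 1) * (1 - y) ^ 2 := by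
    rw [← rpow_natCast, ← rpow_add h1y, ← rpow_add h1y]
    congr 1
    push_cast
    ring
  rw [smul_eq_mul, hsum, inv_rpow h1y.le, rpow_neg (by positivity), inv_inv, hy', hc',
    div_rpow hy0.le (by positivity), mul_rpow hc.le h1y.le, abs_of_pos (by positivity)]
  have := rpow_pos_of_pos hc (s - 1)
  have := rpow_pos_of_pos h1y (s - 1)
  field_simp

lemma integrableOn_rpow_mul_one_add_mul_rpow_neg (hc : 0 < c) (hs : 0 < s) (ht : 0 < t) :
    IntegrableOn (fun u : ℝ ↦ u ^ (s - 1) * (1 + c * u) ^ (-(s + t))) (Ioi 0) := by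
  rw [← image_Ioo_div_mul_one_sub hc, integrableOn_image_iff_integrableOn_abs_deriv_smul
    measurableSet_Ioo (fun y hy ↦ (hasDerivAt_div_mul_one_sub hc.ne' hy.2.ne).hasDerivWithinAt)
    ((injOn_div_mul_one_sub hc.ne').mono Ioo_subset_Iio_self)]
  exact IntegrableOn.congr_fun ((integrableOn_rpow_mul_one_sub_rpow hs ht).const_mul (c ^ (-s)))
    (fun y hy ↦ (abs_deriv_smul_comp_div_mul_one_sub hc s t hy).symm) measurableSet_Ioo

lemma integral_rpow_mul_one_add_mul_rpow_neg (hc : 0 < c) (hs : 0 < s) (ht : 0 < t) :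
    ∫ u in Ioi 0, u ^ (s - 1) * (1 + c * u) ^ (-(s + t)) = c ^ (-s) * Beta s t := by
  rw [← image_Ioo_div_mul_one_sub hc, integral_image_eq_integral_abs_deriv_smul
    measurableSet_Ioo (fun y hy ↦ (hasDerivAt_div_mul_one_sub hc.ne' hy.2.ne).hasDerivWithinAt)
    ((injOn_div_mul_one_sub hc.ne').mono Ioo_subset_Iio_self),
    setIntegral_congr_fun measurableSet_Ioo
      (fun y hy ↦ abs_deriv_smul_comp_div_mul_one_sub hc s t hy),
    integral_const_mul, integral_rpow_mul_one_sub_rpow hs ht]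

end Substitution

section Elementary

variable {x y p q : ℝ}

lemma one_add_rpow_neg_mul_one_add_rpow_neg_le {z : ℝ} (hx : 0 ≤ x) (hy : 0 ≤ y) (hz : 0 ≤ z)
    (hzxy : z ≤ x + y) (hq : 0 ≤ q) (hqp : q ≤ p) :
    (1 + x) ^ (-p) * (1 + y) ^ (-q) ≤ (1 + z) ^ (-q) := by
  rw [rpow_neg (by linarith), rpow_neg (by linarith), rpow_neg (by linarith), ← mul_inv]
  refine inv_anti₀ (by positivity) ?_
  calc (1 + z) ^ q ≤ ((1 + x) * (1 + y)) ^ q := by gcongr; nlinarith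
    _ = (1 + x) ^ q * (1 + y) ^ q := mul_rpow (by linarith) (by linarith)
    _ ≤ (1 + x) ^ p * (1 + y) ^ q := by
      gcongr
      linarith

lemma one_add_rpow_neg_two_mul_le {v : ℝ} (hx : 0 ≤ x) (hy : 0 ≤ y) (hxyv : x + y ≤ 2 * v)
    (hq : 0 ≤ q) (hqp : q ≤ p) :
    (1 + v) ^ (-(2 * p)) ≤ (1 + x) ^ (-p) * (1 + y) ^ (-q) := by
  rw [rpow_neg (by linarith), rpow_neg (by linarith), rpow_neg (by linarith), ← mul_inv]
  refine inv_anti₀ (by positivity) ?_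
  calc (1 + x) ^ p * (1 + y) ^ q ≤ (1 + x) ^ p * (1 + y) ^ p := by
        gcongr
        linarith
    _ = ((1 + x) * (1 + y)) ^ p := (mul_rpow (by linarith) (by linarith)).symm
    _ ≤ ((1 + v) ^ 2) ^ p :=
      rpow_le_rpow (by positivity) (by nlinarith [sq_nonneg (x - y)]) (by linarith)
    _ = (1 + v) ^ (2 * p) := by rw [← rpow_natCast, ← rpow_mul (by linarith), Nat.cast_ofNat]

end Elementary

lemma rpow_mul_rpow_mul_rpow_neg_add {a b r p q : ℝ} (ha : 0 ≤ a) (hb : 0 ≤ b) (hr : 0 < r) :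
    a ^ p * b ^ q * r ^ (-(p + q)) = (a / r) ^ p * (b / r) ^ q := by
  rw [div_rpow ha hr.le, div_rpow hb hr.le, rpow_neg hr.le, rpow_add hr]
  field_simp

section Marginal

variable {m₁ m₂ ν₁ ν₂ w u : ℝ}

lemma K₀_pos (hm₁ : 0 < m₁) (hm₂ : 0 < m₂) (hν₁ : 0 < ν₁) (hν₂ : 0 < ν₂) :
    0 < K₀ m₁ m₂ ν₁ ν₂ := by
  have := Beta_pos (half_pos hm₁) (half_pos hν₁)
  have := Beta_pos (half_pos hm₂) (half_pos hν₂)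
  unfold K₀
  positivity

lemma A₁_mul_phi (hm₁ : 0 < m₁) (hm₂ : 0 < m₂) (hν₁ : 0 < ν₁) (hν₂ : 0 < ν₂) :
    A₁ m₁ m₂ ν₁ ν₂ * phi m₁ m₂ w =
      K₀ m₁ m₂ ν₁ ν₂ * w ^ (m₁ / 2 - 1) * (1 - w) ^ (m₂ / 2 - 1) *
        ((m₂ / ν₂) ^ (-((m₁ + m₂) / 2)) * Beta ((m₁ + m₂) / 2) ((ν₂ - m₁) / 2)) := by
  have hK : K₀ m₁ m₂ ν₁ ν₂ * (m₂ / ν₂) ^ (-((m₁ + m₂) / 2)) =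
      (m₁ * ν₂ / (m₂ * ν₁)) ^ (m₁ / 2) / (Beta (m₁ / 2) (ν₁ / 2) * Beta (m₂ / 2) (ν₂ / 2)) := by
    rw [K₀, div_mul_eq_mul_div, add_div,
      rpow_mul_rpow_mul_rpow_neg_add (by positivity) (by positivity) (by positivity),
      div_self (by positivity), one_rpow, mul_one]
    congr 2
    field_simp
  have := Beta_pos (half_pos hm₁) (half_pos hm₂)
  calc A₁ m₁ m₂ ν₁ ν₂ * phi m₁ m₂ w =
        (m₁ * ν₂ / (m₂ * ν₁)) ^ (m₁ / 2) / (Beta (m₁ / 2) (ν₁ / 2) * Beta (m₂ / 2) (ν₂ / 2)) *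
          w ^ (m₁ / 2 - 1) * (1 - w) ^ (m₂ / 2 - 1) * Beta ((m₁ + m₂) / 2) ((ν₂ - m₁) / 2) := by
        unfold A₁ phi
        field_simp
    _ = _ := by rw [← hK]; ring

lemma A₂_mul_phi (hm₁ : 0 < m₁) (hm₂ : 0 < m₂) (hν₁ : 0 < ν₁) (hν₂ : 0 < ν₂) :
    A₂ m₁ m₂ ν₁ ν₂ * phi m₁ m₂ w =
      K₀ m₁ m₂ ν₁ ν₂ * w ^ (m₁ / 2 - 1) * (1 - w) ^ (m₂ / 2 - 1) *
        ((m₁ / (2 * ν₁)) ^ (-((m₁ + m₂) / 2)) *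
          Beta ((m₁ + m₂) / 2) ((m₁ - m₂ + 2 * ν₁) / 2)) := by
  have hK : K₀ m₁ m₂ ν₁ ν₂ * (m₁ / (2 * ν₁)) ^ (-((m₁ + m₂) / 2)) =
      2 ^ ((m₁ + m₂) / 2) * (m₂ * ν₁ / (m₁ * ν₂)) ^ (m₂ / 2) /
        (Beta (m₁ / 2) (ν₁ / 2) * Beta (m₂ / 2) (ν₂ / 2)) := by
    rw [K₀, div_mul_eq_mul_div, add_div,
      rpow_mul_rpow_mul_rpow_neg_add (by positivity) (by positivity) (by positivity),
      rpow_add two_pos, mul_assoc, ← mul_rpow zero_le_two (by positivity)]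
    congr 3
    · field_simp
    · field_simp
  have := Beta_pos (half_pos hm₁) (half_pos hm₂)
  calc A₂ m₁ m₂ ν₁ ν₂ * phi m₁ m₂ w =
        2 ^ ((m₁ + m₂) / 2) * (m₂ * ν₁ / (m₁ * ν₂)) ^ (m₂ / 2) /
          (Beta (m₁ / 2) (ν₁ / 2) * Beta (m₂ / 2) (ν₂ / 2)) * w ^ (m₁ / 2 - 1) *
          (1 - w) ^ (m₂ / 2 - 1) * Beta ((m₁ + m₂) / 2) ((m₁ - m₂ + 2 * ν₁) / 2) := by
        unfold A₂ phi
        field_simp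
    _ = _ := by rw [← hK]; ring

lemma hDens_eq (m₁ m₂ ν₁ ν₂ u w : ℝ) :
    hDens m₁ m₂ ν₁ ν₂ u w =
      K₀ m₁ m₂ ν₁ ν₂ * w ^ (m₁ / 2 - 1) * (1 - w) ^ (m₂ / 2 - 1) *
        (u ^ ((m₁ + m₂) / 2 - 1) * ((1 + m₁ * u * w / ν₁) ^ (-((m₁ + ν₁) / 2)) *
          (1 + m₂ * u * (1 - w) / ν₂) ^ (-((m₂ + ν₂) / 2)))) := by
  rw [hDens, neg_div, neg_div]
  ring

lemma hDens_le (hm₁ : 0 < m₁) (hm₂ : 0 < m₂) (hν₁ : 0 < ν₁) (hν₂ : 0 < ν₂)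
    (h1 : ν₂ - ν₁ < m₁ - m₂) (h2 : m₂ / ν₂ ≤ m₁ / ν₁) (hw0 : 0 ≤ w) (hw1 : w ≤ 1) (hu : 0 ≤ u) :
    hDens m₁ m₂ ν₁ ν₂ u w ≤
      K₀ m₁ m₂ ν₁ ν₂ * w ^ (m₁ / 2 - 1) * (1 - w) ^ (m₂ / 2 - 1) *
        (u ^ ((m₁ + m₂) / 2 - 1) * (1 + m₂ / ν₂ * u) ^ (-((m₁ + m₂) / 2 + (ν₂ - m₁) / 2))) := by
  have hK := K₀_pos hm₁ hm₂ hν₁ hν₂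
  have hsplit : m₂ / ν₂ * u ≤ m₁ * u * w / ν₁ + m₂ * u * (1 - w) / ν₂ := by
    linear_combination (w * u) * h2
  rw [hDens_eq, show (m₁ + m₂) / 2 + (ν₂ - m₁) / 2 = (m₂ + ν₂) / 2 by ring]
  gcongr
  exact one_add_rpow_neg_mul_one_add_rpow_neg_le (by positivity) (by positivity) (by positivity)
    hsplit (by positivity) (by linarith)

lemma le_hDens (hm₁ : 0 < m₁) (hm₂ : 0 < m₂) (hν₁ : 0 < ν₁) (hν₂ : 0 < ν₂)
    (h1 : ν₂ - ν₁ < m₁ - m₂) (h2 : m₂ / ν₂ ≤ m₁ / ν₁) (hw0 : 0 ≤ w) (hw1 : w ≤ 1) (hu : 0 ≤ u) :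
    K₀ m₁ m₂ ν₁ ν₂ * w ^ (m₁ / 2 - 1) * (1 - w) ^ (m₂ / 2 - 1) *
        (u ^ ((m₁ + m₂) / 2 - 1) *
          (1 + m₁ / (2 * ν₁) * u) ^ (-((m₁ + m₂) / 2 + (m₁ - m₂ + 2 * ν₁) / 2))) ≤
      hDens m₁ m₂ ν₁ ν₂ u w := by
  have hK := K₀_pos hm₁ hm₂ hν₁ hν₂
  have hsplit : m₁ * u * w / ν₁ + m₂ * u * (1 - w) / ν₂ ≤ 2 * (m₁ / (2 * ν₁) * u) := by
    linear_combination ((1 - w) * u) * h2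
  rw [hDens_eq, show (m₁ + m₂) / 2 + (m₁ - m₂ + 2 * ν₁) / 2 = 2 * ((m₁ + ν₁) / 2) by ring]
  gcongr
  exact one_add_rpow_neg_two_mul_le (by positivity) (by positivity) hsplit (by positivity)
    (by linarith)

lemma measurable_hDens (m₁ m₂ ν₁ ν₂ w : ℝ) : Measurable (fun u ↦ hDens m₁ m₂ ν₁ ν₂ u w) := by
  unfold hDens
  fun_prop

end Marginal

theorem marginal_density_bounds_general
    (m₁ m₂ ν₁ ν₂ : ℝ) (hm₁ : 0 < m₁) (hm₂ : 0 < m₂) (hν₁ : 0 < ν₁) (hν₂ : 0 < ν₂)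
    (h1 : ν₂ - ν₁ < m₁ - m₂) (h2 : m₂ / ν₂ ≤ m₁ / ν₁)
    (h4 : m₁ < ν₂)
    (w : ℝ) (hw0 : 0 < w) (hw1 : w < 1) :
    A₂ m₁ m₂ ν₁ ν₂ * phi m₁ m₂ w ≤ (∫ u in Ioi (0 : ℝ), hDens m₁ m₂ ν₁ ν₂ u w) ∧
      (∫ u in Ioi (0 : ℝ), hDens m₁ m₂ ν₁ ν₂ u w) ≤ A₁ m₁ m₂ ν₁ ν₂ * phi m₁ m₂ w := by
  have hs : 0 < (m₁ + m₂) / 2 := by positivity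
  have ht₁ : 0 < (ν₂ - m₁) / 2 := by linarith
  have ht₂ : 0 < (m₁ - m₂ + 2 * ν₁) / 2 := by linarith
  have hc₁ : 0 < m₂ / ν₂ := by positivity
  have hc₂ : 0 < m₁ / (2 * ν₁) := by positivity
  have hupper := (integrableOn_rpow_mul_one_add_mul_rpow_neg hc₁ hs ht₁).const_mul
    (K₀ m₁ m₂ ν₁ ν₂ * w ^ (m₁ / 2 - 1) * (1 - w) ^ (m₂ / 2 - 1))
  have hlower := (integrableOn_rpow_mul_one_add_mul_rpow_neg hc₂ hs ht₂).const_mul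
    (K₀ m₁ m₂ ν₁ ν₂ * w ^ (m₁ / 2 - 1) * (1 - w) ^ (m₂ / 2 - 1))
  have hle (u : ℝ) (hu : u ∈ Ioi 0) :=
    hDens_le hm₁ hm₂ hν₁ hν₂ h1 h2 hw0.le hw1.le (le_of_lt hu)
  have hge (u : ℝ) (hu : u ∈ Ioi 0) :=
    le_hDens hm₁ hm₂ hν₁ hν₂ h1 h2 hw0.le hw1.le (le_of_lt hu)
  have hint : IntegrableOn (fun u ↦ hDens m₁ m₂ ν₁ ν₂ u w) (Ioi 0) :=
    integrable_of_le_of_le (measurable_hDens m₁ m₂ ν₁ ν₂ w).aestronglyMeasurable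
      (ae_restrict_of_forall_mem measurableSet_Ioi hge)
      (ae_restrict_of_forall_mem measurableSet_Ioi hle) hlower hupper
  constructor
  · rw [A₂_mul_phi hm₁ hm₂ hν₁ hν₂, ← integral_rpow_mul_one_add_mul_rpow_neg hc₂ hs ht₂,
      ← integral_const_mul]
    exact setIntegral_mono_on hlower hint measurableSet_Ioi hge
  · rw [A₁_mul_phi hm₁ hm₂ hν₁ hν₂, ← integral_rpow_mul_one_add_mul_rpow_neg hc₁ hs ht₁,
      ← integral_const_mul]
    exact setIntegral_mono_on hint hupper measurableSet_Ioi hle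

/-- The marginal density `h_W(w) = ∫₀^∞ h(u,w) du` of `W` satisfies
`A₂ φ(w) ≤ h_W(w) ≤ A₁ φ(w)` for `0 < w < 1`. -/
theorem marginal_density_bounds
    (m₁ m₂ ν₁ ν₂ : ℝ) (hm₁ : 0 < m₁) (hm₂ : 0 < m₂) (hν₁ : 0 < ν₁) (hν₂ : 0 < ν₂)
    (h1 : ν₂ - ν₁ < m₁ - m₂) (h2 : m₂ / ν₂ ≤ m₁ / ν₁)
    (h3 : 0 < m₁ - m₂ + 2 * ν₁) (h4 : m₁ < ν₂)
    (w : ℝ) (hw0 : 0 < w) (hw1 : w < 1) :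
    A₂ m₁ m₂ ν₁ ν₂ * phi m₁ m₂ w ≤ (∫ u in Ioi (0 : ℝ), hDens m₁ m₂ ν₁ ν₂ u w) ∧
      (∫ u in Ioi (0 : ℝ), hDens m₁ m₂ ν₁ ν₂ u w) ≤ A₁ m₁ m₂ ν₁ ν₂ * phi m₁ m₂ w :=
  marginal_density_bounds_general m₁ m₂ ν₁ ν₂ hm₁ hm₂ hν₁ hν₂ h1 h2 h4 w hw0 hw1
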